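/- arXiv:2010.04349 — 2 statements merged into one kernel-verified Lean document; each statement's English description precedes it below -/
import Mathlib

section
/- If a twice continuously differentiable function f: ℝ^{n×n} → ℝ satisfies δ-RIP_{2r,4r}, then it satisfies 2δ-BDP_{2r}; that is, |[∇²f(M) - ∇²f(M')](K,L)| ≤ 2δ‖K‖_F‖L‖_F for all matrices M, M', K, L of rank at most 2r. -/
/-! The difference `B = ∇²f(M) - ∇²f(M')` is a symmetric bilinear form (Schwarz), and by RIP at
`M` and at `M'` its quadratic form satisfies `|B(A, A)| ≤ 2δ‖A‖_F²` for every `A` of rank at most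
`4r`, in particular on the whole plane spanned by `K` and `L`. Polarization at the unit vectors
`K/‖K‖_F ± L/‖L‖_F`, together with the parallelogram law, turns this into
`|B(K, L)| ≤ 2δ‖K‖_F‖L‖_F`. -/

noncomputable def frob {m n : Type*} [Fintype m] [Fintype n] (A : Matrix m n ℝ) : ℝ :=
  Real.sqrt (∑ i, ∑ j, (A i j)^2)

attribute [local instance] Matrix.normedAddCommGroup Matrix.normedSpace

/-- The Hessian of `f` at `M`, as a bilinear form applied to `(K, L)`. -/
noncomputable def Hess {n : ℕ} (f : Matrix (Fin n) (Fin n) ℝ → ℝ)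
    (M K L : Matrix (Fin n) (Fin n) ℝ) : ℝ :=
  iteratedFDeriv ℝ 2 f M ![K, L]

section Frobenius

variable {m n : Type*} [Fintype m] [Fintype n]

lemma frob_sq (A : Matrix m n ℝ) : frob A ^ 2 = ∑ i, ∑ j, A i j ^ 2 :=
  Real.sq_sqrt (by positivity)

lemma frob_pos {A : Matrix m n ℝ} (hA : A ≠ 0) : 0 < frob A := by
  refine Real.sqrt_pos.mpr (lt_of_le_of_ne (by positivity) fun h => hA ?_)
  ext i j
  rw [eq_comm, Fintype.sum_eq_zero_iff_of_nonneg (fun i => by positivity)] at h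
  have hi := congrFun h i
  rw [Pi.zero_apply, Fintype.sum_eq_zero_iff_of_nonneg (fun j => by positivity)] at hi
  exact pow_eq_zero_iff two_ne_zero |>.mp (congrFun hi j)

lemma frob_smul (c : ℝ) (A : Matrix m n ℝ) : frob (c • A) = |c| * frob A := by
  simp only [frob, Matrix.smul_apply, smul_eq_mul, mul_pow, ← Finset.mul_sum]
  rw [Real.sqrt_mul (sq_nonneg c), Real.sqrt_sq_eq_abs]

lemma frob_add_sq_add_frob_sub_sq (A B : Matrix m n ℝ) :
    frob (A + B) ^ 2 + frob (A - B) ^ 2 = 2 * frob A ^ 2 + 2 * frob B ^ 2 := by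
  simp only [frob_sq, Finset.mul_sum, ← Finset.sum_add_distrib, Matrix.add_apply,
    Matrix.sub_apply]
  congr! 2
  ring

lemma abs_apply_le_of_abs_apply_self_le {B : LinearMap.BilinForm ℝ (Matrix m n ℝ)}
    (hB : B.IsSymm) {c : ℝ} {K L : Matrix m n ℝ}
    (h : ∀ a b : ℝ, |B (a • K + b • L) (a • K + b • L)| ≤ c * frob (a • K + b • L) ^ 2) :
    |B K L| ≤ c * frob K * frob L := by
  rcases eq_or_ne K 0 with rfl | hK
  · simp [frob]
  rcases eq_or_ne L 0 with rfl | hL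
  · simp [frob]
  have ha := frob_pos hK
  have hb := frob_pos hL
  set a := frob K
  set b := frob L
  have hpol : B (a⁻¹ • K + b⁻¹ • L) (a⁻¹ • K + b⁻¹ • L)
      - B (a⁻¹ • K + (-b⁻¹) • L) (a⁻¹ • K + (-b⁻¹) • L) = 4 * (a * b)⁻¹ * B K L := by
    simp only [map_add, map_smul, LinearMap.add_apply, LinearMap.smul_apply, smul_eq_mul,
      hB.eq L K, mul_inv]
    ring
  have hnorm : frob (a⁻¹ • K + b⁻¹ • L) ^ 2 + frob (a⁻¹ • K + (-b⁻¹) • L) ^ 2 = 4 := by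
    rw [neg_smul, ← sub_eq_add_neg, frob_add_sq_add_frob_sub_sq, frob_smul, frob_smul,
      abs_inv, abs_inv, abs_of_pos ha, abs_of_pos hb, inv_mul_cancel₀ ha.ne',
      inv_mul_cancel₀ hb.ne']
    norm_num
  have hab : 0 < a * b := mul_pos ha hb
  have hbound : 4 * (a * b)⁻¹ * |B K L| ≤ 4 * c := by
    calc 4 * (a * b)⁻¹ * |B K L| = |4 * (a * b)⁻¹ * B K L| := by
          rw [abs_mul, abs_of_pos (mul_pos four_pos (inv_pos.mpr hab))]
      _ ≤ _ := hpol ▸ abs_sub _ _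
      _ ≤ _ := add_le_add (h _ _) (h _ _)
      _ = 4 * c := by rw [← mul_add, hnorm, mul_comm]
  calc |B K L| = a * b / 4 * (4 * (a * b)⁻¹ * |B K L|) := by field_simp
    _ ≤ a * b / 4 * (4 * c) := by gcongr
    _ = c * a * b := by ring

end Frobenius

lemma Matrix.rank_add_le {m n K : Type*} [Fintype n] [Field K] (A B : Matrix m n K) :
    (A + B).rank ≤ A.rank + B.rank := by
  have h : LinearMap.range (A + B).mulVecLin ≤
      LinearMap.range A.mulVecLin ⊔ LinearMap.range B.mulVecLin := by
    rw [Matrix.mulVecLin_add]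
    rintro _ ⟨v, rfl⟩
    exact Submodule.add_mem_sup (LinearMap.mem_range_self _ v) (LinearMap.mem_range_self _ v)
  exact (Submodule.finrank_mono h).trans (Submodule.finrank_add_le_finrank_add_finrank _ _)

lemma Matrix.rank_smul_le {m n K : Type*} [Fintype n] [Field K] (c : K) (A : Matrix m n K) :
    (c • A).rank ≤ A.rank := by
  rcases eq_or_ne c 0 with rfl | hc
  · simp
  · exact (A.rank_smul_of_mem_nonZeroDivisors (mem_nonZeroDivisors_of_ne_zero hc)).le

section Hessian

variable {n : ℕ}

lemma Hess_eq_fderiv_fderiv (f : Matrix (Fin n) (Fin n) ℝ → ℝ)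
    (M K L : Matrix (Fin n) (Fin n) ℝ) : Hess f M K L = fderiv ℝ (fderiv ℝ f) M K L := by
  rw [Hess, iteratedFDeriv_two_apply]
  rfl

noncomputable def hessDiff (f : Matrix (Fin n) (Fin n) ℝ → ℝ) (M M' : Matrix (Fin n) (Fin n) ℝ) :
    LinearMap.BilinForm ℝ (Matrix (Fin n) (Fin n) ℝ) :=
  (fderiv ℝ (fderiv ℝ f) M - fderiv ℝ (fderiv ℝ f) M').toLinearMap₁₂

lemma hessDiff_apply (f : Matrix (Fin n) (Fin n) ℝ → ℝ) (M M' K L : Matrix (Fin n) (Fin n) ℝ) :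
    hessDiff f M M' K L = Hess f M K L - Hess f M' K L := by
  simp [hessDiff, Hess_eq_fderiv_fderiv]

lemma Hess_comm {f : Matrix (Fin n) (Fin n) ℝ → ℝ} (hf : ContDiff ℝ 2 f)
    (M K L : Matrix (Fin n) (Fin n) ℝ) : Hess f M K L = Hess f M L K :=
  IsSymmSndFDerivAt.iteratedFDeriv_cons (hf := hf.contDiffAt.isSymmSndFDerivAt (by simp))

lemma hessDiff_isSymm {f : Matrix (Fin n) (Fin n) ℝ → ℝ} (hf : ContDiff ℝ 2 f)
    (M M' : Matrix (Fin n) (Fin n) ℝ) : (hessDiff f M M').IsSymm :=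
  ⟨fun K L => by simp only [hessDiff_apply, Hess_comm hf _ K L]⟩

end Hessian

theorem stmt_3_general {n r : ℕ} (δ : ℝ)
    (f : Matrix (Fin n) (Fin n) ℝ → ℝ) (hf : ContDiff ℝ 2 f)
    (hRIP : ∀ M K : Matrix (Fin n) (Fin n) ℝ, M.rank ≤ 2 * r → K.rank ≤ 4 * r →
      (1 - δ) * frob K ^ 2 ≤ Hess f M K K ∧ Hess f M K K ≤ (1 + δ) * frob K ^ 2)
    (M M' K L : Matrix (Fin n) (Fin n) ℝ)
    (hM : M.rank ≤ 2 * r) (hM' : M'.rank ≤ 2 * r)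
    (hK : K.rank ≤ 2 * r) (hL : L.rank ≤ 2 * r) :
    |Hess f M K L - Hess f M' K L| ≤ 2 * δ * frob K * frob L := by
  have hquad : ∀ a b : ℝ, |hessDiff f M M' (a • K + b • L) (a • K + b • L)|
      ≤ 2 * δ * frob (a • K + b • L) ^ 2 := by
    intro a b
    have hrank : (a • K + b • L).rank ≤ 4 * r := by
      have := (a • K).rank_add_le (b • L)
      have := K.rank_smul_le a
      have := L.rank_smul_le b
      omega
    obtain ⟨hM₁, hM₂⟩ := hRIP M _ hM hrank
    obtain ⟨hM'₁, hM'₂⟩ := hRIP M' _ hM' hrank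
    rw [hessDiff_apply, abs_sub_le_iff]
    constructor <;> linarith
  simpa only [hessDiff_apply] using
    abs_apply_le_of_abs_apply_self_le (hessDiff_isSymm hf M M') hquad

theorem stmt_3 {n r : ℕ} (δ : ℝ) (hδ0 : 0 ≤ δ) (hδ1 : δ < 1)
    (f : Matrix (Fin n) (Fin n) ℝ → ℝ) (hf : ContDiff ℝ 2 f)
    (hRIP : ∀ M K : Matrix (Fin n) (Fin n) ℝ, M.rank ≤ 2 * r → K.rank ≤ 4 * r →
      (1 - δ) * frob K ^ 2 ≤ Hess f M K K ∧ Hess f M K K ≤ (1 + δ) * frob K ^ 2)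
    (M M' K L : Matrix (Fin n) (Fin n) ℝ)
    (hM : M.rank ≤ 2 * r) (hM' : M'.rank ≤ 2 * r)
    (hK : K.rank ≤ 2 * r) (hL : L.rank ≤ 2 * r) :
    |Hess f M K L - Hess f M' K L| ≤ 2 * δ * frob K * frob L :=
  stmt_3_general δ f hf hRIP M M' K L hM hM' hK hL
end

section
/- Let X, Y ∈ ℝ^{n×r} be matrices such that XᵀY is symmetric. Then ‖XYᵀ + YXᵀ‖_F² ≥ 2λ_r(XXᵀ)·‖Y‖_F², where λ_r(XXᵀ) is the r-th largest eigenvalue of XXᵀ. -/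
/-!
Write `P = XYᵀ`. Since `XᵀY = YᵀX`, expanding the square gives
`‖P + Pᵀ‖_F² = 2 tr(Y (XᵀX) Yᵀ) + 2 tr(Yᵀ (XXᵀ) Y)`, and each of these traces is at least the
smallest eigenvalue of the middle Gram matrix times `‖Y‖_F²`. It remains to bound `λ_r(XXᵀ)` by
one of these smallest eigenvalues. If `n ≤ r`, the index `n - r` of `kthLargestEig` truncates to
`0`, so `λ_r(XXᵀ)` is the smallest eigenvalue of `XXᵀ`. If `r ≤ n`, the identity
`t^r χ_{XXᵀ}(t) = t^n χ_{XᵀX}(t)` shows that `XXᵀ` has, besides `n - r` extra zeros, the same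
eigenvalues as `XᵀX`, so at least `n - r + 1` of its eigenvalues are at most `λ_min(XᵀX) ≥ 0`.
-/

open Matrix

/-- The `k`-th largest eigenvalue (1-indexed) of a Hermitian real matrix. -/
noncomputable def kthLargestEig {n : ℕ} (A : Matrix (Fin n) (Fin n) ℝ)
    (hA : A.IsHermitian) (k : ℕ) : ℝ :=
  ((Finset.univ.val.map hA.eigenvalues).sort (· ≤ ·)).getD (n - k) 0

open scoped MatrixOrder ComplexOrder

theorem frob_sq_s11 {m p : Type*} [Fintype m] [Fintype p] (A : Matrix m p ℝ) :
    frob A ^ 2 = (Aᵀ * A).trace := by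
  rw [frob, Real.sq_sqrt (by positivity), trace, Finset.sum_comm]
  simp [mul_apply, sq]

theorem Matrix.trace_transpose_add_mul_self {m R : Type*} [Fintype m] [CommRing R]
    (P : Matrix m m R) :
    ((P + Pᵀ)ᵀ * (P + Pᵀ)).trace = 2 * (Pᵀ * P).trace + 2 * (P * P).trace := by
  have hPPt : (P * Pᵀ).trace = (Pᵀ * P).trace := trace_mul_comm P Pᵀ
  have hPtPt : (Pᵀ * Pᵀ).trace = (P * P).trace := by rw [← transpose_mul, trace_transpose]
  rw [transpose_add, transpose_transpose, add_mul, mul_add, mul_add, trace_add, trace_add,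
    trace_add, hPPt, hPtPt]
  ring

theorem Matrix.trace_mul_transpose_sq_of_isSymm {m p R : Type*} [Fintype m] [Fintype p]
    [CommRing R] {X Y : Matrix m p R} (hsymm : (Xᵀ * Y).IsSymm) :
    (X * Yᵀ * (X * Yᵀ)).trace = (Yᵀ * (X * Xᵀ) * Y).trace := by
  have hS : Yᵀ * X = Xᵀ * Y := by rw [← transpose_transpose X, ← transpose_mul]; exact hsymm
  calc (X * Yᵀ * (X * Yᵀ)).trace = (X * Xᵀ * Y * Yᵀ).trace := by
        simp only [Matrix.mul_assoc, ← Matrix.mul_assoc Yᵀ X, hS]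
    _ = (Yᵀ * (X * Xᵀ) * Y).trace := by
        rw [trace_mul_comm]
        simp only [Matrix.mul_assoc]

theorem List.Pairwise.getD_le_of_lt_countP {α : Type*} [Preorder α] [DecidableLE α]
    {l : List α} (hl : l.Pairwise (· ≤ ·)) {k : ℕ} {b d : α} (hk : k < l.countP (· ≤ b)) :
    l.getD k d ≤ b := by
  induction l generalizing k with
  | nil => simp at hk
  | cons a t ih =>
    rw [List.pairwise_cons] at hl
    cases k with
    | zero =>
      obtain ⟨x, hx, hxb⟩ := List.countP_pos_iff.mp hk
      rw [decide_eq_true_eq] at hxb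
      rcases List.mem_cons.mp hx with rfl | hx
      · exact hxb
      · exact (hl.1 x hx).trans hxb
    | succ k =>
      rw [List.countP_cons] at hk
      exact ih hl.2 (by split_ifs at hk <;> omega)

theorem Multiset.sort_getD_le_of_lt_countP {α : Type*} [LinearOrder α] (s : Multiset α)
    {k : ℕ} {b d : α} (hk : k < s.countP (· ≤ b)) : (s.sort (· ≤ ·)).getD k d ≤ b := by
  refine (s.pairwise_sort _).getD_le_of_lt_countP ?_
  rwa [← Multiset.coe_countP, Multiset.sort_eq]

section kthLargestEig

variable {n : ℕ} {A : Matrix (Fin n) (Fin n) ℝ} (hA : A.IsHermitian)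

theorem kthLargestEig_le_of_lt_countP {k : ℕ} {b : ℝ}
    (h : n - k < (Finset.univ.val.map hA.eigenvalues).countP (· ≤ b)) :
    kthLargestEig A hA k ≤ b :=
  Multiset.sort_getD_le_of_lt_countP _ h

theorem kthLargestEig_le_eigenvalues {k : ℕ} (hnk : n ≤ k) (i : Fin n) :
    kthLargestEig A hA k ≤ hA.eigenvalues i := by
  refine kthLargestEig_le_of_lt_countP hA ?_
  rw [Nat.sub_eq_zero_of_le hnk, Multiset.countP_pos]
  exact ⟨_, Multiset.mem_map_of_mem _ (Finset.mem_univ_val i), le_rfl⟩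

end kthLargestEig

theorem Matrix.IsHermitian.posSemidef_sub_smul_one {m 𝕜 : Type*} [RCLike 𝕜] [Fintype m]
    [DecidableEq m] {M : Matrix m m 𝕜} (hM : M.IsHermitian) {c : ℝ}
    (hc : ∀ i, c ≤ hM.eigenvalues i) : (M - c • 1).PosSemidef := by
  rw [← le_iff, ← Algebra.algebraMap_eq_smul_one,
    algebraMap_le_iff_le_spectrum (ha := hM.isSelfAdjoint), hM.spectrum_real_eq_range_eigenvalues]
  rintro _ ⟨i, rfl⟩
  exact hc i

theorem Matrix.IsHermitian.mul_trace_le_trace_transpose_mul_mul {m p : Type*} [Fintype m]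
    [DecidableEq m] [Fintype p] {M : Matrix m m ℝ} (hM : M.IsHermitian) {c : ℝ}
    (hc : ∀ i, c ≤ hM.eigenvalues i) (Z : Matrix m p ℝ) :
    c * (Zᵀ * Z).trace ≤ (Zᵀ * M * Z).trace := by
  have h := ((hM.posSemidef_sub_smul_one hc).conjTranspose_mul_mul_same Z).trace_nonneg
  rwa [conjTranspose_eq_transpose_of_trivial, Matrix.mul_sub, Matrix.sub_mul, trace_sub,
    Matrix.mul_smul, Matrix.smul_mul, Matrix.mul_one, trace_smul, smul_eq_mul, sub_nonneg] at h

theorem Matrix.PosSemidef.trace_transpose_mul_mul_nonneg {m p : Type*} [Fintype m] [Fintype p]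
    {M : Matrix m m ℝ} (hM : M.PosSemidef) (Z : Matrix m p ℝ) : 0 ≤ (Zᵀ * M * Z).trace := by
  simpa using (hM.conjTranspose_mul_mul_same Z).trace_nonneg

theorem Matrix.posSemidef_self_mul_transpose {m p : Type*} [Fintype m] [Fintype p]
    (X : Matrix m p ℝ) : (X * Xᵀ).PosSemidef := by
  simpa using posSemidef_self_mul_conjTranspose X

theorem Matrix.posSemidef_transpose_mul_self {m p : Type*} [Fintype m] [Fintype p]
    (X : Matrix m p ℝ) : (Xᵀ * X).PosSemidef := by
  simpa using posSemidef_conjTranspose_mul_self X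

theorem Matrix.replicate_add_eigenvalues_mul_transpose {m p : Type*} [Fintype m] [DecidableEq m]
    [Fintype p] [DecidableEq p] (X : Matrix m p ℝ) (hA : (X * Xᵀ).IsHermitian)
    (hG : (Xᵀ * X).IsHermitian) :
    Multiset.replicate (Fintype.card p) 0 + Finset.univ.val.map hA.eigenvalues =
      Multiset.replicate (Fintype.card m) 0 + Finset.univ.val.map hG.eigenvalues := by
  have h := congrArg Polynomial.roots (charpoly_mul_comm' X Xᵀ)
  rwa [Polynomial.roots_mul ((Polynomial.monic_X_pow _).mul (charpoly_monic _)).ne_zero,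
    Polynomial.roots_mul ((Polynomial.monic_X_pow _).mul (charpoly_monic _)).ne_zero,
    Polynomial.roots_X_pow, Polynomial.roots_X_pow, hA.roots_charpoly_eq_eigenvalues,
    hG.roots_charpoly_eq_eigenvalues, Multiset.nsmul_singleton, Multiset.nsmul_singleton,
    RCLike.ofReal_real_eq_id, Function.id_comp] at h

theorem kthLargestEig_mul_transpose_le {n r : ℕ} (X : Matrix (Fin n) (Fin r) ℝ)
    (hA : (X * Xᵀ).IsHermitian) (hrn : r ≤ n) (j : Fin r) :
    kthLargestEig (X * Xᵀ) hA r ≤ (posSemidef_transpose_mul_self X).isHermitian.eigenvalues j := by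
  set hG := (posSemidef_transpose_mul_self X).isHermitian
  set b := hG.eigenvalues j
  have hb : 0 ≤ b := (posSemidef_transpose_mul_self X).eigenvalues_nonneg j
  have hzeros (k : ℕ) : (Multiset.replicate k (0 : ℝ)).countP (· ≤ b) = k := by
    rw [Multiset.countP_eq_card.mpr fun _ ha ↦ Multiset.eq_of_mem_replicate ha ▸ hb,
      Multiset.card_replicate]
  have hcount :=
    congrArg (Multiset.countP (· ≤ b)) (replicate_add_eigenvalues_mul_transpose X hA hG)
  simp only [Multiset.countP_add, Fintype.card_fin, hzeros] at hcount
  have hj : 0 < (Finset.univ.val.map hG.eigenvalues).countP (· ≤ b) :=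
    Multiset.countP_pos.mpr ⟨_, Multiset.mem_map_of_mem _ (Finset.mem_univ_val j), le_rfl⟩
  exact kthLargestEig_le_of_lt_countP hA (by omega)

theorem stmt_11 {n r : ℕ} (X Y : Matrix (Fin n) (Fin r) ℝ)
    (hsymm : (Xᵀ * Y).IsSymm) (hherm : (X * Xᵀ).IsHermitian) :
    frob (X * Yᵀ + Y * Xᵀ) ^ 2 ≥ 2 * kthLargestEig (X * Xᵀ) hherm r * frob Y ^ 2 := by
  have hG := posSemidef_transpose_mul_self X
  have hsplit : frob (X * Yᵀ + Y * Xᵀ) ^ 2 =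
      2 * (Y * (Xᵀ * X) * Yᵀ).trace + 2 * (Yᵀ * (X * Xᵀ) * Y).trace := by
    have hP : Y * Xᵀ = (X * Yᵀ)ᵀ := by rw [transpose_mul, transpose_transpose]
    rw [frob_sq_s11, hP, trace_transpose_add_mul_self, ← hP, trace_mul_transpose_sq_of_isSymm hsymm]
    simp only [Matrix.mul_assoc]
  have hYA := (posSemidef_self_mul_transpose X).trace_transpose_mul_mul_nonneg Y
  have hYG := hG.trace_transpose_mul_mul_nonneg Yᵀ
  rw [transpose_transpose] at hYG
  rw [ge_iff_le, hsplit, frob_sq_s11]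
  rcases le_total n r with hnr | hrn
  · have hμ := hherm.mul_trace_le_trace_transpose_mul_mul
      (kthLargestEig_le_eigenvalues hherm hnr) Y
    linarith
  · have hμ := hG.isHermitian.mul_trace_le_trace_transpose_mul_mul
      (kthLargestEig_mul_transpose_le X hherm hrn) Yᵀ
    rw [transpose_transpose, trace_mul_comm Y Yᵀ] at hμ
    linarith
end
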